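/- Let n ≥ 1 and for each i = 1,…,n let Σ_i and V_i be m_i×m_i real symmetric positive definite matrices and A_i an m_i×d real matrix. Suppose S_V := ∑_{i=1}^n A_iᵀ V_i^{-1} A_i and S_Σ := ∑_{i=1}^n A_iᵀ Σ_i^{-1} A_i are both invertible. Then S_V^{-1} (∑_{i=1}^n A_iᵀ V_i^{-1} Σ_i V_i^{-1} A_i) S_V^{-1} ⪰ S_Σ^{-1}, with equality when V_i = Σ_i for every i (in which case the left-hand side equals S_Σ^{-1}). -/

import Mathlib

/-!
With `P = S_V⁻¹`, `Q = S_Σ⁻¹` and `B_i = V_i⁻¹ A_i P - Σ_i⁻¹ A_i Q`, expanding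
`∑ B_iᴴ Σ_i B_i` gives `P (∑ A_iᴴ V_i⁻¹ Σ_i V_i⁻¹ A_i) P - P S_V Q - Q S_V P + Q S_Σ Q`,
and since `P S_V = S_V P = 1 = S_Σ Q` the last three terms collapse to `-Q = -S_Σ⁻¹`.
So the sandwich minus `S_Σ⁻¹` is a sum of congruences of the positive semidefinite `Σ_i`.
-/

open Matrix

namespace Matrix

variable {R : Type*} [CommRing R] [StarRing R] {n : Type*}

theorem conjTranspose_sub_inv_mul_mul_mul_sub {k : Type*} [Fintype k] [DecidableEq k]
    {S : Matrix k k R} (hS : S.IsHermitian) (hSu : IsUnit S) (X Y : Matrix k n R) :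
    (X - S⁻¹ * Y)ᴴ * S * (X - S⁻¹ * Y) = Xᴴ * S * X - Xᴴ * Y - Yᴴ * X + Yᴴ * S⁻¹ * Y := by
  have hdet : IsUnit S.det := (isUnit_iff_isUnit_det S).mp hSu
  simp only [conjTranspose_sub, conjTranspose_mul, hS.inv.eq, Matrix.sub_mul, Matrix.mul_sub,
    Matrix.mul_assoc, mul_nonsing_inv_cancel_left (h := hdet),
    nonsing_inv_mul_cancel_left (h := hdet)]
  abel

variable {ι : Type*} [Fintype ι] {m : ι → Type*} [∀ i, Fintype (m i)]

theorem isHermitian_sum_conjTranspose_mul_mul {W : ∀ i, Matrix (m i) (m i) R}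
    (hW : ∀ i, (W i).IsHermitian) (A : ∀ i, Matrix (m i) n R) :
    (∑ i, (A i)ᴴ * W i * A i).IsHermitian :=
  isSelfAdjoint_sum _ fun i _ ↦ isHermitian_conjTranspose_mul_mul (A i) (hW i)

variable [∀ i, DecidableEq (m i)]

theorem sum_conjTranspose_mul_inv_mul_mul_inv_mul {S : ∀ i, Matrix (m i) (m i) R}
    (hSu : ∀ i, IsUnit (S i)) (A : ∀ i, Matrix (m i) n R) :
    ∑ i, (A i)ᴴ * (S i)⁻¹ * S i * (S i)⁻¹ * A i = ∑ i, (A i)ᴴ * (S i)⁻¹ * A i := by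
  refine Finset.sum_congr rfl fun i _ ↦ ?_
  rw [mul_nonsing_inv_cancel_right _ _ ((isUnit_iff_isUnit_det _).mp (hSu i))]

variable [Fintype n]

theorem sum_conjTranspose_mul_mul_eq {S V : ∀ i, Matrix (m i) (m i) R}
    (hS : ∀ i, (S i).IsHermitian) (hSu : ∀ i, IsUnit (S i)) (hV : ∀ i, (V i).IsHermitian)
    (A : ∀ i, Matrix (m i) n R) {P Q : Matrix n n R} (hP : P.IsHermitian) (hQ : Q.IsHermitian) :
    ∑ i, ((V i)⁻¹ * A i * P - (S i)⁻¹ * (A i * Q))ᴴ * S i *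
        ((V i)⁻¹ * A i * P - (S i)⁻¹ * (A i * Q)) =
      P * (∑ i, (A i)ᴴ * (V i)⁻¹ * S i * (V i)⁻¹ * A i) * P
        - P * (∑ i, (A i)ᴴ * (V i)⁻¹ * A i) * Q - Q * (∑ i, (A i)ᴴ * (V i)⁻¹ * A i) * P
        + Q * (∑ i, (A i)ᴴ * (S i)⁻¹ * A i) * Q := by
  simp only [conjTranspose_sub_inv_mul_mul_mul_sub (hS _) (hSu _), Finset.sum_add_distrib,
    Finset.sum_sub_distrib, Finset.mul_sum, Finset.sum_mul, conjTranspose_mul, hP.eq, hQ.eq,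
    (hV _).inv.eq, Matrix.mul_assoc]

variable [DecidableEq n]

theorem sandwich_sub_inv_eq_sum {S V : ∀ i, Matrix (m i) (m i) R}
    (hS : ∀ i, (S i).IsHermitian) (hSu : ∀ i, IsUnit (S i)) (hV : ∀ i, (V i).IsHermitian)
    {A : ∀ i, Matrix (m i) n R} {SV SS : Matrix n n R}
    (hSV : SV = ∑ i, (A i)ᴴ * (V i)⁻¹ * A i) (hSS : SS = ∑ i, (A i)ᴴ * (S i)⁻¹ * A i)
    (hSVu : IsUnit SV) (hSSu : IsUnit SS) :
    SV⁻¹ * (∑ i, (A i)ᴴ * (V i)⁻¹ * S i * (V i)⁻¹ * A i) * SV⁻¹ - SS⁻¹ =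
      ∑ i, ((V i)⁻¹ * A i * SV⁻¹ - (S i)⁻¹ * (A i * SS⁻¹))ᴴ * S i *
        ((V i)⁻¹ * A i * SV⁻¹ - (S i)⁻¹ * (A i * SS⁻¹)) := by
  have hSVh : SV.IsHermitian := hSV ▸ isHermitian_sum_conjTranspose_mul_mul (fun i ↦ (hV i).inv) A
  have hSSh : SS.IsHermitian := hSS ▸ isHermitian_sum_conjTranspose_mul_mul (fun i ↦ (hS i).inv) A
  have hSVdet := (isUnit_iff_isUnit_det SV).mp hSVu
  have hSSdet := (isUnit_iff_isUnit_det SS).mp hSSu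
  rw [sum_conjTranspose_mul_mul_eq hS hSu hV A hSVh.inv hSSh.inv, ← hSV, ← hSS,
    nonsing_inv_mul _ hSVdet, Matrix.one_mul, mul_nonsing_inv_cancel_right _ _ hSVdet,
    mul_nonsing_inv_cancel_right _ _ hSSdet]
  abel

theorem posSemidef_sandwich_sub_inv [PartialOrder R] [StarOrderedRing R]
    {S V : ∀ i, Matrix (m i) (m i) R} (hS : ∀ i, (S i).PosSemidef) (hSu : ∀ i, IsUnit (S i))
    (hV : ∀ i, (V i).IsHermitian) {A : ∀ i, Matrix (m i) n R} {SV SS : Matrix n n R}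
    (hSV : SV = ∑ i, (A i)ᴴ * (V i)⁻¹ * A i) (hSS : SS = ∑ i, (A i)ᴴ * (S i)⁻¹ * A i)
    (hSVu : IsUnit SV) (hSSu : IsUnit SS) :
    (SV⁻¹ * (∑ i, (A i)ᴴ * (V i)⁻¹ * S i * (V i)⁻¹ * A i) * SV⁻¹ - SS⁻¹).PosSemidef := by
  rw [sandwich_sub_inv_eq_sum (fun i ↦ (hS i).isHermitian) hSu hV hSV hSS hSVu hSSu]
  exact posSemidef_sum _ fun i _ ↦ (hS i).conjTranspose_mul_mul_same _

end Matrix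

theorem sandwich_covariance_ge_inverse_information_general
    (n : ℕ) (d : ℕ) (m : Fin n → ℕ)
    (S V : ∀ i : Fin n, Matrix (Fin (m i)) (Fin (m i)) ℝ)
    (A : ∀ i : Fin n, Matrix (Fin (m i)) (Fin d) ℝ)
    (hS : ∀ i, (S i).PosDef) (hV : ∀ i, (V i).PosDef)
    (SV SS : Matrix (Fin d) (Fin d) ℝ)
    (hSV : SV = ∑ i, (A i)ᵀ * (V i)⁻¹ * A i)
    (hSS : SS = ∑ i, (A i)ᵀ * (S i)⁻¹ * A i)
    (hSVu : IsUnit SV) (hSSu : IsUnit SS) :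
    (SV⁻¹ * (∑ i, (A i)ᵀ * (V i)⁻¹ * S i * (V i)⁻¹ * A i) * SV⁻¹ - SS⁻¹).PosSemidef ∧
    ((∀ i, V i = S i) →
      SV⁻¹ * (∑ i, (A i)ᵀ * (V i)⁻¹ * S i * (V i)⁻¹ * A i) * SV⁻¹ = SS⁻¹) := by
  simp only [← conjTranspose_eq_transpose_of_trivial] at hSV hSS ⊢
  have hSu : ∀ i, IsUnit (S i) := fun i ↦ (hS i).isUnit
  refine ⟨posSemidef_sandwich_sub_inv (fun i ↦ (hS i).posSemidef) hSu
    (fun i ↦ (hV i).isHermitian) hSV hSS hSVu hSSu, fun hVS ↦ ?_⟩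
  obtain rfl : V = S := funext hVS
  obtain rfl : SV = SS := hSV.trans hSS.symm
  rw [sum_conjTranspose_mul_inv_mul_mul_inv_mul hSu, ← hSV,
    mul_nonsing_inv_cancel_right _ _ ((isUnit_iff_isUnit_det SV).mp hSVu)]

/-- Optimality of the true covariance in GEE: with `S_V = ∑ A_iᵀ V_i⁻¹ A_i`
and `S_Σ = ∑ A_iᵀ Σ_i⁻¹ A_i` both invertible, the sandwich matrix
`S_V⁻¹ (∑ A_iᵀ V_i⁻¹ Σ_i V_i⁻¹ A_i) S_V⁻¹` dominates `S_Σ⁻¹` in the Loewner order,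
with equality when `V_i = Σ_i` for every `i`. -/
theorem sandwich_covariance_ge_inverse_information
    (n : ℕ) (hn : 1 ≤ n) (d : ℕ) (m : Fin n → ℕ)
    (S V : ∀ i : Fin n, Matrix (Fin (m i)) (Fin (m i)) ℝ)
    (A : ∀ i : Fin n, Matrix (Fin (m i)) (Fin d) ℝ)
    (hS : ∀ i, (S i).PosDef) (hV : ∀ i, (V i).PosDef)
    (SV SS : Matrix (Fin d) (Fin d) ℝ)
    (hSV : SV = ∑ i, (A i)ᵀ * (V i)⁻¹ * A i)
    (hSS : SS = ∑ i, (A i)ᵀ * (S i)⁻¹ * A i)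
    (hSVu : IsUnit SV) (hSSu : IsUnit SS) :
    (SV⁻¹ * (∑ i, (A i)ᵀ * (V i)⁻¹ * S i * (V i)⁻¹ * A i) * SV⁻¹ - SS⁻¹).PosSemidef ∧
    ((∀ i, V i = S i) →
      SV⁻¹ * (∑ i, (A i)ᵀ * (V i)⁻¹ * S i * (V i)⁻¹ * A i) * SV⁻¹ = SS⁻¹) :=
  sandwich_covariance_ge_inverse_information_general n d m S V A hS hV SV SS hSV hSS hSVu hSSu
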